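/- arXiv:1910.00807 — 4 statements merged into one kernel-verified Lean document; each statement's English description precedes it below -/
import Mathlib

section
/- For integers n ≥ 2 and 0 ≤ l ≤ n-2, the sum ∑_{k=0}^{l} 1/((l-k)! · (n-1)(n-2)⋯(n-1-k)) equals 1/(l! · (n-l-1)). -/
/-!
Write `x = n - 1`. Splitting off the `k = 0` term and factoring `x` out of every other falling
product leaves `1/x` times the same sum for `l - 1` at the point `x - 1`, so induction on `l` reduces
the identity to `1/(l+1)! + 1/(l! (x - l - 1)) = x / ((l+1)! (x - l - 1))`.
-/

open Finset Nat

theorem prod_range_succ_sub_natCast {K : Type*} [CommRing K] (x : K) (k : ℕ) :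
    ∏ j ∈ range (k + 1), (x - j) = x * ∏ j ∈ range k, (x - 1 - j) := by
  rw [prod_range_succ', Nat.cast_zero, sub_zero, mul_comm]
  congr 1
  refine prod_congr rfl fun j _ => ?_
  push_cast
  ring

theorem sum_range_one_div_factorial_mul_prod_sub {K : Type*} [Field K] [CharZero K]
    (l : ℕ) (x : K) (hx : ∀ j ≤ l, x - j ≠ 0) :
    ∑ k ∈ range (l + 1), 1 / ((l - k)! * ∏ j ∈ range (k + 1), (x - j)) = 1 / (l ! * (x - l)) := by
  induction l generalizing x with
  | zero => simp
  | succ l ih =>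
    have hx0 : x ≠ 0 := by simpa using hx 0 (Nat.zero_le _)
    have hxl : x - (l + 1 : ℕ) ≠ 0 := hx (l + 1) le_rfl
    have ih' := ih (x - 1) fun j hj => by
      simpa [sub_sub, add_comm] using hx (j + 1) (Nat.succ_le_succ hj)
    have shifted : ∀ k ∈ range (l + 1),
        1 / ((l + 1 - (k + 1))! * ∏ j ∈ range (k + 1 + 1), (x - j)) =
          x⁻¹ * (1 / ((l - k)! * ∏ j ∈ range (k + 1), (x - 1 - j))) := fun k _ => by
      rw [prod_range_succ_sub_natCast, Nat.add_sub_add_right]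
      field_simp
    rw [sum_range_succ', sum_congr rfl shifted, ← mul_sum, ih', Nat.sub_zero, zero_add,
      prod_range_one, Nat.cast_zero, sub_zero]
    have hxl' : x - 1 - l ≠ 0 := by simpa [sub_sub, add_comm] using hxl
    push_cast at hxl ⊢
    rw [Nat.factorial_succ]
    push_cast
    field_simp
    ring

theorem stmt_0 (n l : ℕ) (hn : 2 ≤ n) (hl : l ≤ n - 2) :
    ∑ k ∈ Finset.range (l + 1),
      (1 : ℚ) / ((Nat.factorial (l - k)) * ∏ j ∈ Finset.range (k + 1), ((n : ℚ) - 1 - j)) =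
    1 / ((Nat.factorial l) * ((n : ℚ) - l - 1)) := by
  have hx : ∀ j ≤ l, (n : ℚ) - 1 - j ≠ 0 := fun j hj => by
    rw [sub_sub, sub_ne_zero]
    exact_mod_cast (show n ≠ 1 + j by omega)
  rw [sum_range_one_div_factorial_mul_prod_sub l _ hx, sub_right_comm]
end

section
/- The Hadamard finite-part integral f.p.∫_0^∞ x^{-n}/(1+x²) dx equals (π/2)·(-1)^m when n = 2m is even, and equals 0 when n = 2m+1 is odd, for n ≥ 1. -/
/-!
Write `f x = 1 / (1 + x²)`, so that `x² f x = 1 - f x`. Integrating this identity against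
`x^{-n-2}` over `(ε, ∞)` gives `J (n+2) = ε^{-n-1} / (n+1) - J n` for `J n = ∫_ε^∞ f x / x^n`;
differentiating it `k + 2` times at `0` (Leibniz rule) gives `a (k+2) = -a k` for the Taylor
coefficients `a k = f⁽ᵏ⁾(0) / k!`, with `a 0 = 1` and `a 1 = 0`. The second recursion makes the
counterterms (powers of `ε` and the `log ε` term) obey the first one, so for `n ≥ 1` the
regularised integral changes sign when `n` grows by `2`. It remains to compute the cases
`n = 1` and `n = 2`, where it equals `log (1 + ε²) / 2 → 0` and `arctan ε - π / 2 → -π / 2`.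
-/

open Real MeasureTheory Filter Set Finset

/-- `IsFinitePart n f L` : the Hadamard finite-part integral
`f.p.∫₀^∞ x^{-n} f(x) dx` exists and equals `L`. -/
def IsFinitePart (n : ℕ) (f : ℝ → ℝ) (L : ℝ) : Prop :=
  Tendsto (fun ε : ℝ =>
      (∫ x in Ioi ε, f x / x ^ n)
        - ∑ k ∈ Finset.range (n - 1),
            ε ^ ((k : ℤ) + 1 - n) * iteratedDeriv k f 0 / (Nat.factorial k * (n - 1 - k : ℝ))
        + Real.log ε / (Nat.factorial (n - 1)) * iteratedDeriv (n - 1) f 0)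
    (nhdsWithin 0 (Ioi 0)) (nhds L)

open scoped Topology

noncomputable def finitePartApprox (n : ℕ) (f : ℝ → ℝ) (ε : ℝ) : ℝ :=
  (∫ x in Ioi ε, f x / x ^ n)
    - ∑ k ∈ Finset.range (n - 1),
        ε ^ ((k : ℤ) + 1 - n) * iteratedDeriv k f 0 / (Nat.factorial k * (n - 1 - k : ℝ))
    + Real.log ε / (Nat.factorial (n - 1)) * iteratedDeriv (n - 1) f 0

theorem isFinitePart_iff_tendsto {n : ℕ} {f : ℝ → ℝ} {L : ℝ} :
    IsFinitePart n f L ↔ Tendsto (finitePartApprox n f) (𝓝[>] 0) (𝓝 L) :=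
  Iff.rfl

noncomputable def finitePartCounterterm (a : ℕ → ℝ) (n : ℕ) (ε : ℝ) : ℝ :=
  ∑ k ∈ range (n - 1), a k * ε ^ ((k : ℤ) + 1 - n) / (n - 1 - k) - a (n - 1) * log ε

theorem finitePartApprox_eq_sub_counterterm (n : ℕ) (f : ℝ → ℝ) (ε : ℝ) :
    finitePartApprox n f ε = (∫ x in Ioi ε, f x / x ^ n)
      - finitePartCounterterm (fun k => iteratedDeriv k f 0 / k.factorial) n ε := by
  have hsum : ∀ k ∈ range (n - 1),
      ε ^ ((k : ℤ) + 1 - n) * iteratedDeriv k f 0 / (k.factorial * (n - 1 - k : ℝ))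
        = iteratedDeriv k f 0 / k.factorial * ε ^ ((k : ℤ) + 1 - n) / (n - 1 - k) := by
    intro k _
    rw [mul_comm (ε ^ _), ← div_div, div_mul_eq_mul_div]
  rw [finitePartApprox, finitePartCounterterm, sum_congr rfl hsum]
  ring

theorem finitePartCounterterm_add_two {a : ℕ → ℝ} (ha₁ : a 1 = 0) (ha : ∀ k, a (k + 2) = -a k)
    {n : ℕ} (hn : 1 ≤ n) (ε : ℝ) :
    finitePartCounterterm a (n + 2) ε
      = a 0 * (ε ^ (n + 1))⁻¹ / (n + 1) - finitePartCounterterm a n ε := by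
  obtain ⟨m, rfl⟩ := Nat.exists_eq_add_of_le' hn
  simp only [finitePartCounterterm, Nat.add_sub_cancel, show m + 1 + 2 - 1 = m + 2 by omega,
    sum_range_succ' _ (m + 1), sum_range_succ' _ m, ha, ha₁]
  have hsum : ∑ k ∈ range m, -a k * ε ^ (((k + 1 + 1 : ℕ) : ℤ) + 1 - ((m + 1 + 2 : ℕ) : ℤ))
        / (((m + 1 + 2 : ℕ) : ℝ) - 1 - ((k + 1 + 1 : ℕ) : ℝ))
      = -∑ k ∈ range m,
          a k * ε ^ ((k : ℤ) + 1 - ((m + 1 : ℕ) : ℤ)) / (((m + 1 : ℕ) : ℝ) - 1 - k) := by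
    rw [← sum_neg_distrib]
    refine sum_congr rfl fun k _ => ?_
    push_cast
    ring_nf
  have hpow : ε ^ (((0 : ℕ) : ℤ) + 1 - ((m + 1 + 2 : ℕ) : ℤ)) = (ε ^ (m + 1 + 1))⁻¹ := by
    rw [← zpow_natCast, ← zpow_neg]
    push_cast
    ring_nf
  rw [hsum, hpow]
  push_cast
  ring

theorem contDiff_one_div_one_add_sq {n : WithTop ℕ∞} :
    ContDiff ℝ n (fun x : ℝ => 1 / (1 + x ^ 2)) :=
  contDiff_const.div (contDiff_const.add (contDiff_id.pow 2)) fun x => by positivity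

theorem iteratedDeriv_one_div_one_add_sq_add_two (k : ℕ) :
    iteratedDeriv (k + 2) (fun x : ℝ => 1 / (1 + x ^ 2)) 0
      = -(((k : ℝ) + 2) * (k + 1)) * iteratedDeriv k (fun x : ℝ => 1 / (1 + x ^ 2)) 0 := by
  set f : ℝ → ℝ := fun x => 1 / (1 + x ^ 2) with hf
  have hsq : (fun x => x ^ 2 * f x) = fun x => 1 - f x := by
    funext x
    have : (1 : ℝ) + x ^ 2 ≠ 0 := by positivity
    simp only [hf]
    field_simp
    ring
  have hleib := iteratedDeriv_fun_mul (n := k + 2) (x := (0 : ℝ))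
    ((contDiff_id.pow 2).contDiffAt (f := fun x : ℝ => x ^ 2))
    (contDiff_one_div_one_add_sq.contDiffAt (f := f))
  rw [hsq, iteratedDeriv_const_sub (by omega), iteratedDeriv_neg] at hleib
  rw [Finset.sum_eq_single 2 (fun i _ hi => by rw [iteratedDeriv_fun_pow_zero, if_neg hi]; ring)
    (by simp)] at hleib
  simp only [iteratedDeriv_fun_pow_zero, if_true, Nat.add_sub_cancel, Nat.cast_choose_two] at hleib
  rw [neg_eq_iff_eq_neg.mp hleib]
  push_cast [Nat.factorial_two]
  ring

theorem taylorCoeff_one_div_one_add_sq_add_two (k : ℕ) :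
    iteratedDeriv (k + 2) (fun x : ℝ => 1 / (1 + x ^ 2)) 0 / ((k + 2).factorial : ℝ)
      = -(iteratedDeriv k (fun x : ℝ => 1 / (1 + x ^ 2)) 0 / (k.factorial : ℝ)) := by
  rw [iteratedDeriv_one_div_one_add_sq_add_two, Nat.factorial_succ, Nat.factorial_succ]
  push_cast
  field_simp
  ring

theorem integrableOn_Ioi_one_div_one_add_sq_div_pow (n : ℕ) {ε : ℝ} (hε : 0 < ε) :
    IntegrableOn (fun x : ℝ => 1 / (1 + x ^ 2) / x ^ n) (Ioi ε) := by
  have hbound : ∀ᵐ x ∂(volume.restrict (Ioi ε)), ‖(x ^ n)⁻¹‖ ≤ (ε ^ n)⁻¹ := by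
    filter_upwards [ae_restrict_mem measurableSet_Ioi] with x hx
    rw [norm_inv, norm_pow, Real.norm_of_nonneg (hε.trans hx).le]
    gcongr
    exact hx.le
  exact IntegrableOn.congr_fun (integrable_inv_one_add_sq.restrict.bdd_mul (by fun_prop) hbound)
    (fun x _ => by ring) measurableSet_Ioi

theorem integral_Ioi_inv_pow_add_two (n : ℕ) {ε : ℝ} (hε : 0 < ε) :
    ∫ x in Ioi ε, (x ^ (n + 2))⁻¹ = (ε ^ (n + 1))⁻¹ / (n + 1) := by
  have hrpow : ∀ x ∈ Ioi ε, x ^ (-(n + 2 : ℝ)) = (x ^ (n + 2))⁻¹ := fun x hx => by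
    rw [rpow_neg (hε.trans hx).le, ← Nat.cast_ofNat, ← Nat.cast_add, rpow_natCast]
  rw [← setIntegral_congr_fun measurableSet_Ioi hrpow, integral_Ioi_rpow_of_lt (by linarith) hε,
    show -(n + 2 : ℝ) + 1 = -((n + 1 : ℕ) : ℝ) by push_cast; ring, rpow_neg hε.le, rpow_natCast,
    neg_div_neg_eq, Nat.cast_succ]

theorem integral_Ioi_one_div_one_add_sq_div_pow_add_two (n : ℕ) {ε : ℝ} (hε : 0 < ε) :
    ∫ x in Ioi ε, 1 / (1 + x ^ 2) / x ^ (n + 2)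
      = (ε ^ (n + 1))⁻¹ / (n + 1) - ∫ x in Ioi ε, 1 / (1 + x ^ 2) / x ^ n := by
  have hsplit : EqOn (fun x : ℝ => 1 / (1 + x ^ 2) / x ^ (n + 2))
      (fun x => (x ^ (n + 2))⁻¹ - 1 / (1 + x ^ 2) / x ^ n) (Ioi ε) := fun x hx => by
    have : x ≠ 0 := (hε.trans hx).ne'
    field_simp
    ring
  have hint : IntegrableOn (fun x : ℝ => (x ^ (n + 2))⁻¹) (Ioi ε) :=
    (integrableOn_Ioi_one_div_one_add_sq_div_pow (n + 2) hε).add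
      (integrableOn_Ioi_one_div_one_add_sq_div_pow n hε) |>.congr_fun
        (fun x hx => by
          have : x ≠ 0 := (hε.trans hx).ne'
          simp only [Pi.add_apply]
          field_simp
          ring) measurableSet_Ioi
  rw [setIntegral_congr_fun measurableSet_Ioi hsplit,
    integral_sub hint (integrableOn_Ioi_one_div_one_add_sq_div_pow n hε),
    integral_Ioi_inv_pow_add_two n hε]

theorem log_sub_half_log_one_add_sq {x : ℝ} (hx : 0 < x) :
    log x - log (1 + x ^ 2) / 2 = -(log (1 + (x⁻¹) ^ 2) / 2) := by
  rw [show 1 + x⁻¹ ^ 2 = (1 + x ^ 2) / x ^ 2 by field_simp; ring,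
    log_div (by positivity) (by positivity), log_pow]
  push_cast
  ring

theorem integral_Ioi_one_div_one_add_sq_div_pow_one {ε : ℝ} (hε : 0 < ε) :
    ∫ x in Ioi ε, 1 / (1 + x ^ 2) / x ^ 1 = log (1 + ε ^ 2) / 2 - log ε := by
  have hderiv : ∀ x ∈ Ici ε, HasDerivAt (fun x => log x - log (1 + x ^ 2) / 2)
      (1 / (1 + x ^ 2) / x ^ 1) x := fun x hx => by
    have hx : 0 < x := hε.trans_le hx
    have hsq : HasDerivAt (fun x : ℝ => 1 + x ^ 2) (2 * x) x := by
      simpa using (hasDerivAt_pow 2 x).const_add 1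
    refine ((hasDerivAt_log hx.ne').fun_sub ((hsq.log (by positivity)).div_const 2)).congr_deriv ?_
    field_simp
    ring
  have hlim : Tendsto (fun x => log x - log (1 + x ^ 2) / 2) atTop (𝓝 0) := by
    have h : Tendsto (fun x : ℝ => -(log (1 + (x⁻¹) ^ 2) / 2)) atTop (𝓝 (-(log (1 + 0 ^ 2) / 2))) :=
      (((continuousAt_log (by norm_num)).tendsto.comp
        ((tendsto_inv_atTop_zero.pow 2).const_add 1)).div_const 2).neg
    rw [zero_pow two_ne_zero, add_zero, log_one, zero_div, neg_zero] at h
    refine h.congr' ?_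
    filter_upwards [eventually_gt_atTop 0] with x hx
    exact (log_sub_half_log_one_add_sq hx).symm
  rw [integral_Ioi_of_hasDerivAt_of_tendsto' hderiv
    (integrableOn_Ioi_one_div_one_add_sq_div_pow 1 hε) hlim]
  ring

theorem finitePartApprox_one_div_one_add_sq_add_two {n : ℕ} (hn : 1 ≤ n) {ε : ℝ} (hε : 0 < ε) :
    finitePartApprox (n + 2) (fun x => 1 / (1 + x ^ 2)) ε
      = -finitePartApprox n (fun x => 1 / (1 + x ^ 2)) ε := by
  rw [finitePartApprox_eq_sub_counterterm, finitePartApprox_eq_sub_counterterm,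
    integral_Ioi_one_div_one_add_sq_div_pow_add_two n hε,
    finitePartCounterterm_add_two (by simp) taylorCoeff_one_div_one_add_sq_add_two hn]
  simp

theorem finitePartApprox_one_div_one_add_sq_one {ε : ℝ} (hε : 0 < ε) :
    finitePartApprox 1 (fun x => 1 / (1 + x ^ 2)) ε = log (1 + ε ^ 2) / 2 := by
  rw [finitePartApprox_eq_sub_counterterm, integral_Ioi_one_div_one_add_sq_div_pow_one hε,
    finitePartCounterterm]
  simp

theorem finitePartApprox_one_div_one_add_sq_two {ε : ℝ} (hε : 0 < ε) :
    finitePartApprox 2 (fun x => 1 / (1 + x ^ 2)) ε = arctan ε - π / 2 := by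
  rw [finitePartApprox_eq_sub_counterterm, integral_Ioi_one_div_one_add_sq_div_pow_add_two 0 hε,
    finitePartCounterterm]
  norm_num

theorem isFinitePart_one_div_one_add_sq_one : IsFinitePart 1 (fun x => 1 / (1 + x ^ 2)) 0 := by
  rw [isFinitePart_iff_tendsto]
  have h : Tendsto (fun ε : ℝ => log (1 + ε ^ 2) / 2) (𝓝[>] 0) (𝓝 (log (1 + 0 ^ 2) / 2)) :=
    ((by fun_prop (disch := intro; positivity) :
      Continuous fun ε : ℝ => log (1 + ε ^ 2) / 2).tendsto 0).mono_left nhdsWithin_le_nhds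
  simp only [zero_pow two_ne_zero, add_zero, log_one, zero_div] at h
  exact h.congr' (eventually_nhdsWithin_of_forall fun ε hε =>
    (finitePartApprox_one_div_one_add_sq_one hε).symm)

theorem isFinitePart_one_div_one_add_sq_two :
    IsFinitePart 2 (fun x => 1 / (1 + x ^ 2)) (-(π / 2)) := by
  rw [isFinitePart_iff_tendsto]
  have h : Tendsto (fun ε : ℝ => arctan ε - π / 2) (𝓝[>] 0) (𝓝 (arctan 0 - π / 2)) :=
    ((continuous_arctan.sub continuous_const).tendsto 0).mono_left nhdsWithin_le_nhds
  rw [arctan_zero, zero_sub] at h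
  exact h.congr' (eventually_nhdsWithin_of_forall fun ε hε =>
    (finitePartApprox_one_div_one_add_sq_two hε).symm)

theorem IsFinitePart.one_div_one_add_sq_add_two {n : ℕ} (hn : 1 ≤ n) {L : ℝ}
    (h : IsFinitePart n (fun x => 1 / (1 + x ^ 2)) L) :
    IsFinitePart (n + 2) (fun x => 1 / (1 + x ^ 2)) (-L) := by
  rw [isFinitePart_iff_tendsto] at h ⊢
  exact h.neg.congr' (eventually_nhdsWithin_of_forall fun ε hε =>
    (finitePartApprox_one_div_one_add_sq_add_two hn hε).symm)

theorem stmt_5 (n : ℕ) (hn : 1 ≤ n) :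
    IsFinitePart n (fun x => 1 / (1 + x ^ 2))
      (if n % 2 = 0 then (π / 2) * (-1 : ℝ) ^ (n / 2) else 0) := by
  induction n using Nat.strong_induction_on with
  | _ n ih =>
    match n, hn with
    | 1, _ => simpa using isFinitePart_one_div_one_add_sq_one
    | 2, _ => simpa using isFinitePart_one_div_one_add_sq_two
    | m + 3, _ =>
      convert (ih (m + 1) (by omega) (by omega)).one_div_one_add_sq_add_two (by omega) using 1
      rw [show (m + 3) % 2 = (m + 1) % 2 by omega, show (m + 3) / 2 = (m + 1) / 2 + 1 by omega]
      split_ifs <;> ring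
end

section
/- The Hadamard finite-part integral f.p.∫_0^∞ x^{-2} e^{-x} dx equals −1 + γ. Equivalently, lim_{ε↓0} ( ∫_ε^∞ e^{-x}/x² dx − 1/ε − log ε ) = −1 + γ. -/
/-!
Since `d/dx (-e^{-x}/x - log x · e^{-x}) = e^{-x}/x² + log x · e^{-x}`, integrating over `(ε, ∞)`
gives
`∫_ε^∞ e^{-x}/x² dx - 1/ε - log ε = (e^{-ε} - 1)/ε + (e^{-ε} - 1) log ε - ∫_ε^∞ log x · e^{-x} dx`.
As `ε → 0⁺` the first two terms tend to `-1` and `0`, and the last integral tends to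
`∫_0^∞ log x · e^{-x} dx = Γ'(1) = -γ`.
-/

open Real MeasureTheory Filter Set
open Asymptotics Topology

theorem tendsto_setIntegral_Ioi_nhdsGT {E : Type*} [NormedAddCommGroup E] [NormedSpace ℝ E]
    {f : ℝ → E} {a : ℝ} (hf : IntegrableOn f (Ioi a)) :
    Tendsto (fun b => ∫ x in Ioi b, f x) (𝓝[>] a) (𝓝 (∫ x in Ioi a, f x)) := by
  have hint : IntervalIntegrable f volume a (a + 1) :=
    (intervalIntegrable_iff_integrableOn_Ioc_of_le (by linarith)).2
      (hf.mono_set Ioc_subset_Ioi_self)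
  have hprimitive : Tendsto (fun b => ∫ x in a..b, f x) (𝓝[>] a) (𝓝 0) := by
    have h := intervalIntegral.continuousWithinAt_primitive (a := a) (b₀ := a) (b₁ := a)
      (b₂ := a + 1) (μ := volume) Real.volume_singleton (by simpa using hint)
    simpa using h.tendsto.mono_left (nhdsWithin_mono _ Ioc_subset_Icc_self |>.trans'
      (nhdsWithin_le_of_mem (Ioc_mem_nhdsGT (by linarith))))
  have h := (tendsto_const_nhds (x := ∫ x in Ioi a, f x)).sub hprimitive
  rw [sub_zero] at h
  refine h.congr' ?_
  filter_upwards [self_mem_nhdsWithin] with b (hb : a < b)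
  rw [← intervalIntegral.integral_Ioi_sub_Ioi hf hb.le, sub_sub_cancel]

theorem integral_log_mul_exp_neg :
    ∫ x in Ioi 0, log x * exp (-x) = -eulerMascheroniConstant := by
  have hGammaIntegral := Complex.hasDerivAt_GammaIntegral (s := 1) one_pos
  have hGamma : HasDerivAt Complex.Gamma
      ((∫ x in Ioi 0, log x * exp (-x) : ℝ) : ℂ) ((1 : ℝ) : ℂ) := by
    rw [← integral_complex_ofReal, Complex.ofReal_one]
    refine (hGammaIntegral.congr_of_eventuallyEq ?_).congr_deriv
      (setIntegral_congr_fun measurableSet_Ioi fun t _ => by simp)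
    filter_upwards [(isOpen_lt continuous_const Complex.continuous_re).mem_nhds
      (by simp : (0 : ℝ) < (1 : ℂ).re)] with s hs
    exact Complex.Gamma_eq_integral hs
  have hGammaReal := hGamma.real_of_complex
  simp only [Complex.Gamma_ofReal, Complex.ofReal_re] at hGammaReal
  exact hGammaReal.unique hasDerivAt_Gamma_one

/-- The integral is `-γ ≠ 0`, whereas a non-integrable function has integral `0`. -/
theorem integrableOn_log_mul_exp_neg :
    IntegrableOn (fun x => log x * exp (-x)) (Ioi 0) :=
  Integrable.of_integral_ne_zero <| by
    rw [integral_log_mul_exp_neg, neg_ne_zero]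
    exact (one_half_pos.trans one_half_lt_eulerMascheroniConstant).ne'

theorem integrableOn_exp_neg_div_pow {ε : ℝ} (hε : 0 < ε) (n : ℕ) :
    IntegrableOn (fun x => exp (-x) / x ^ n) (Ioi ε) := by
  refine Integrable.mono' ((exp_neg_integrableOn_Ioi ε one_pos).div_const (ε ^ n)) ?_ ?_
  · exact (ContinuousOn.div (by fun_prop) (by fun_prop) fun x hx =>
      pow_ne_zero _ (hε.trans hx).ne').aestronglyMeasurable measurableSet_Ioi
  · filter_upwards [ae_restrict_mem measurableSet_Ioi] with x (hx : ε < x)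
    have hx0 : 0 < x := hε.trans hx
    rw [norm_of_nonneg (by positivity), neg_one_mul]
    gcongr

theorem tendsto_log_mul_exp_neg_atTop : Tendsto (fun x => log x * exp (-x)) atTop (𝓝 0) :=
  (isLittleO_log_id_atTop.mul_isBigO (isBigO_refl (fun x => exp (-x)) atTop)).trans_tendsto <| by
    simpa using tendsto_pow_mul_exp_neg_atTop_nhds_zero 1

theorem tendsto_exp_neg_sub_one_div_nhdsNE :
    Tendsto (fun ε => (exp (-ε) - 1) / ε) (𝓝[≠] 0) (𝓝 (-1)) := by
  have hderiv : HasDerivAt (fun x => exp (-x)) (-1) 0 := by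
    simpa using (hasDerivAt_neg (0 : ℝ)).exp
  refine (hasDerivAt_iff_tendsto_slope.mp hderiv).congr fun ε => ?_
  simp [slope_def_field]

theorem tendsto_exp_neg_sub_one_mul_log_nhdsNE :
    Tendsto (fun ε => (exp (-ε) - 1) * log ε) (𝓝[≠] 0) (𝓝 0) := by
  have hmul_log : Tendsto (fun ε => ε * log ε) (𝓝[≠] 0) (𝓝 0) := by
    simpa using continuous_mul_log.continuousAt.tendsto.mono_left (nhdsWithin_le_nhds (a := 0))
  have h := tendsto_exp_neg_sub_one_div_nhdsNE.mul hmul_log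
  rw [mul_zero] at h
  refine h.congr' ?_
  filter_upwards [self_mem_nhdsWithin] with ε (hε : ε ≠ 0)
  field_simp

theorem integral_exp_neg_div_sq_Ioi {ε : ℝ} (hε : 0 < ε) :
    ∫ x in Ioi ε, exp (-x) / x ^ 2
      = exp (-ε) / ε + log ε * exp (-ε) - ∫ x in Ioi ε, log x * exp (-x) := by
  have hlog : IntegrableOn (fun x => log x * exp (-x)) (Ioi ε) :=
    integrableOn_log_mul_exp_neg.mono_set (Ioi_subset_Ioi hε.le)
  have hderiv : ∀ x ∈ Ici ε, HasDerivAt (fun x => -(exp (-x) / x) - log x * exp (-x))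
      (exp (-x) / x ^ 2 + log x * exp (-x)) x := by
    intro x (hx : ε ≤ x)
    have hx0 : x ≠ 0 := (hε.trans_le hx).ne'
    have hexp : HasDerivAt (fun x => exp (-x)) (-exp (-x)) x := by
      simpa using (hasDerivAt_neg x).exp
    refine ((hexp.div (hasDerivAt_id x) hx0).neg.sub
      ((hasDerivAt_log hx0).mul hexp)).congr_deriv ?_
    simp only [id]
    field_simp
    ring
  have hlim : Tendsto (fun x => -(exp (-x) / x) - log x * exp (-x)) atTop (𝓝 0) := by
    simpa using (tendsto_exp_neg_atTop_nhds_zero.div_atTop tendsto_id).neg.sub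
      tendsto_log_mul_exp_neg_atTop
  have h := integral_Ioi_of_hasDerivAt_of_tendsto' hderiv
    ((integrableOn_exp_neg_div_pow hε 2).add hlog) hlim
  rw [integral_add (integrableOn_exp_neg_div_pow hε 2) hlog] at h
  linarith

theorem stmt_7 :
    Tendsto (fun ε : ℝ => (∫ x in Ioi ε, Real.exp (-x) / x ^ 2) - 1 / ε - Real.log ε)
      (nhdsWithin 0 (Ioi 0)) (nhds (-1 + Real.eulerMascheroniConstant)) := by
  have hboundary := (tendsto_exp_neg_sub_one_div_nhdsNE.add
    tendsto_exp_neg_sub_one_mul_log_nhdsNE).mono_left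
      (nhdsWithin_mono _ fun ε (hε : 0 < ε) => hε.ne')
  have htail := tendsto_setIntegral_Ioi_nhdsGT integrableOn_log_mul_exp_neg
  rw [integral_log_mul_exp_neg] at htail
  have h := hboundary.sub htail
  rw [add_zero, sub_neg_eq_add] at h
  refine h.congr' ?_
  filter_upwards [self_mem_nhdsWithin] with ε (hε : 0 < ε)
  rw [integral_exp_neg_div_sq_Ioi hε]
  ring
end

section
/- Let f be analytic on a neighborhood of 0 with Taylor series ∑ f^{(k)}(0) z^k / k!, and let n ≥ 1. Then (1/2πi) ∮_{|z|=ε} z^{-n} f(z) log(−z) dz = (log ε)/(n-1)! · f^{(n-1)}(0) − ∑_{k=0}^{n-2} ε^{k-n+1} f^{(k)}(0)/(k!(n-1-k)) + O(ε) as ε ↓ 0, where log(−z) on the circle z = ε e^{iθ}, 0 ≤ θ ≤ 2π, means log ε + i(θ − π). -/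
/-!
Write `f = P + R` with `P` the Taylor polynomial of degree `n` at `0` and `R z = O(|z|^(n+1))`.
On `z = ε e^{iθ}` the form `z^(m-1) log(-z) dz` becomes `i ε^m e^{imθ} (log ε + i(θ - π)) dθ`;
since `∫₀^{2π} θ e^{imθ} dθ = 2π/(im)` for `m ≠ 0`, it integrates to `2πi log ε` for `m = 0` and to
`2πi ε^m/m` otherwise. Term by term, `P` yields the principal part plus `f⁽ⁿ⁾(0)/n! · ε`, while `R`
contributes `O(ε² |log ε|) = O(ε)`.
-/

open Real MeasureTheory Filter Set Finset Asymptotics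

open scoped Topology

theorem AnalyticAt.isBigO_sub_taylor {𝕜 : Type*} [NontriviallyNormedField 𝕜] [CompleteSpace 𝕜]
    [CharZero 𝕜] {f : 𝕜 → 𝕜} {x : 𝕜} (hf : AnalyticAt 𝕜 f x) (N : ℕ) :
    (fun y => f (x + y) - ∑ k ∈ range N, iteratedDeriv k f x / (Nat.factorial k) * y ^ k)
      =O[𝓝 0] fun y => ‖y‖ ^ N := by
  simpa [FormalMultilinearSeries.partialSum, FormalMultilinearSeries.ofScalars_apply_eq, mul_comm]
    using hf.hasFPowerSeriesAt.isBigO_sub_partialSum_pow N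

section

open Complex
open scoped Nat

theorem integral_exp_int_mul_I_eq_zero {m : ℤ} (hm : m ≠ 0) :
    ∫ θ in (0 : ℝ)..2 * π, exp (m * I * θ) = 0 := by
  have hmI : (m : ℂ) * I ≠ 0 := mul_ne_zero (Int.cast_ne_zero.2 hm) I_ne_zero
  rw [integral_exp_mul_complex hmI, ofReal_mul, ofReal_ofNat,
    show (m : ℂ) * I * (2 * π) = m * (2 * π * I) by ring, exp_int_mul_two_pi_mul_I]
  simp

theorem integral_mul_exp_int_mul_I {m : ℤ} (hm : m ≠ 0) :
    ∫ θ in (0 : ℝ)..2 * π, (θ : ℂ) * exp (m * I * θ) = 2 * π / (m * I) := by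
  have hmI : (m : ℂ) * I ≠ 0 := mul_ne_zero (Int.cast_ne_zero.2 hm) I_ne_zero
  have hexp (θ : ℝ) :
      HasDerivAt (fun t : ℝ => exp (m * I * t) / (m * I)) (exp (m * I * θ)) θ := by
    simpa [hmI] using
      (((hasDerivAt_id (θ : ℂ)).const_mul ((m : ℂ) * I)).cexp.comp_ofReal).div_const ((m : ℂ) * I)
  rw [intervalIntegral.integral_mul_deriv_eq_deriv_mul (u := fun θ : ℝ => (θ : ℂ))
    (fun θ _ => (hasDerivAt_id θ).ofReal_comp) (fun θ _ => hexp θ) (by simp)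
    (by apply Continuous.intervalIntegrable; fun_prop)]
  rw [show (m : ℂ) * I * (2 * π : ℝ) = m * (2 * π * I) by push_cast; ring,
    exp_int_mul_two_pi_mul_I]
  field_simp
  simp [integral_exp_int_mul_I_eq_zero hm]

theorem integral_exp_int_mul_I_mul_logNeg (m : ℤ) (L : ℂ) :
    ∫ θ in (0 : ℝ)..2 * π, exp (m * I * θ) * (L + I * ((θ : ℂ) - π)) =
      if m = 0 then 2 * π * L else 2 * π / m := by
  have hsplit (θ : ℝ) : exp (m * I * θ) * (L + I * ((θ : ℂ) - π)) =
      (L - I * π) * exp (m * I * θ) + I * ((θ : ℂ) * exp (m * I * θ)) := by ring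
  simp_rw [hsplit]
  rw [intervalIntegral.integral_add (by apply Continuous.intervalIntegrable; fun_prop)
      (by apply Continuous.intervalIntegrable; fun_prop),
    intervalIntegral.integral_const_mul, intervalIntegral.integral_const_mul]
  split_ifs with hm
  · subst hm
    simp only [Int.cast_zero, zero_mul, Complex.exp_zero, mul_one, intervalIntegral.integral_const,
      real_smul]
    rw [intervalIntegral.integral_ofReal (f := fun θ : ℝ => θ), integral_id]
    push_cast
    ring
  · rw [integral_exp_int_mul_I_eq_zero hm, integral_mul_exp_int_mul_I hm]
    field_simp
    simp

theorem norm_ofReal_mul_exp_I_mul (ε θ : ℝ) : ‖(ε : ℂ) * exp (I * θ)‖ = |ε| := by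
  rw [norm_mul, norm_exp_I_mul_ofReal, norm_real, Real.norm_eq_abs, mul_one]

theorem eventually_nhdsGT_forall_circle {p : ℂ → Prop} (hp : ∀ᶠ z in 𝓝 0, p z) :
    ∀ᶠ ε : ℝ in 𝓝[>] 0, ∀ θ : ℝ, p (ε * exp (I * θ)) := by
  obtain ⟨δ, hδ, hball⟩ := Metric.eventually_nhds_iff.1 hp
  filter_upwards [Ioo_mem_nhdsGT hδ] with ε hε θ
  apply hball
  rw [dist_zero_right, norm_ofReal_mul_exp_I_mul, abs_of_pos hε.1]
  exact hε.2

variable {g h : ℂ → ℂ} {ε : ℝ}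

theorem continuous_comp_circle (hg : ∀ θ : ℝ, ContinuousAt g (ε * exp (I * θ))) :
    Continuous fun θ : ℝ => g (ε * exp (I * θ)) :=
  continuous_iff_continuousAt.2 fun θ =>
    (hg θ).comp (f := fun t : ℝ => (ε : ℂ) * exp (I * t)) (by fun_prop)

/-- `∮_{|z| = ε} g(z) log(-z) dz` along `z = ε e^{iθ}`, `0 ≤ θ ≤ 2π`, with
`log(-z) = log ε + i(θ - π)`. -/
noncomputable def logNegCircleIntegral (g : ℂ → ℂ) (ε : ℝ) : ℂ :=
  ∫ θ in (0 : ℝ)..2 * π,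
    g (ε * exp (I * θ)) * ((Real.log ε : ℂ) + I * ((θ : ℂ) - π)) * (I * ε * exp (I * θ))

theorem logNegCircleIntegral_congr (hgh : ∀ θ : ℝ, g (ε * exp (I * θ)) = h (ε * exp (I * θ))) :
    logNegCircleIntegral g ε = logNegCircleIntegral h ε := by
  simp_rw [logNegCircleIntegral, hgh]

theorem intervalIntegrable_logNegCircleIntegrand
    (hg : ∀ θ : ℝ, ContinuousAt g (ε * exp (I * θ))) :
    IntervalIntegrable (fun θ : ℝ =>
      g (ε * exp (I * θ)) * ((Real.log ε : ℂ) + I * ((θ : ℂ) - π)) * (I * ε * exp (I * θ)))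
      volume 0 (2 * π) :=
  ((continuous_comp_circle hg).mul (by fun_prop)).mul (by fun_prop) |>.intervalIntegrable _ _

theorem logNegCircleIntegral_add (hg : ∀ θ : ℝ, ContinuousAt g (ε * exp (I * θ)))
    (hh : ∀ θ : ℝ, ContinuousAt h (ε * exp (I * θ))) :
    logNegCircleIntegral (fun z => g z + h z) ε =
      logNegCircleIntegral g ε + logNegCircleIntegral h ε := by
  simp_rw [logNegCircleIntegral, add_mul]
  exact intervalIntegral.integral_add (intervalIntegrable_logNegCircleIntegrand hg)
    (intervalIntegrable_logNegCircleIntegrand hh)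

theorem logNegCircleIntegral_finset_sum {ι : Type*} (s : Finset ι) (c : ι → ℂ) (g : ι → ℂ → ℂ)
    (hg : ∀ i ∈ s, ∀ θ : ℝ, ContinuousAt (g i) (ε * exp (I * θ))) :
    logNegCircleIntegral (fun z => ∑ i ∈ s, c i * g i z) ε =
      ∑ i ∈ s, c i * logNegCircleIntegral (g i) ε := by
  simp_rw [logNegCircleIntegral, ← intervalIntegral.integral_const_mul]
  rw [← intervalIntegral.integral_finsetSum fun i hi =>
    (intervalIntegrable_logNegCircleIntegrand (hg i hi)).const_mul (c i)]
  simp only [Finset.sum_mul, mul_assoc]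

theorem norm_logNegCircleIntegral_le (hε : 0 < ε) {M : ℝ}
    (hg : ∀ θ : ℝ, ‖g (ε * exp (I * θ))‖ ≤ M) :
    ‖logNegCircleIntegral g ε‖ ≤ M * (|Real.log ε| + π) * ε * (2 * π) := by
  have hbranch (θ : ℝ) (hθ : θ ∈ Ioc 0 (2 * π)) :
      ‖(Real.log ε : ℂ) + I * ((θ : ℂ) - π)‖ ≤ |Real.log ε| + π := by
    refine (norm_add_le _ _).trans (add_le_add (by rw [norm_real, Real.norm_eq_abs]) ?_)
    rw [norm_mul, norm_I, one_mul, ← ofReal_sub, norm_real, Real.norm_eq_abs, abs_le]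
    constructor <;> linarith [hθ.1, hθ.2]
  have hdz (θ : ℝ) : ‖I * ε * exp (I * θ)‖ = ε := by
    rw [mul_assoc, norm_mul, norm_I, one_mul, norm_ofReal_mul_exp_I_mul, abs_of_pos hε]
  refine (intervalIntegral.norm_integral_le_of_norm_le_const fun θ hθ => ?_).trans_eq
    (by rw [sub_zero, abs_of_pos (by positivity)])
  rw [uIoc_of_le (by positivity)] at hθ
  rw [norm_mul, norm_mul, hdz]
  gcongr
  exacts [(norm_nonneg _).trans (hg 0), hg θ, hbranch θ hθ]

theorem norm_logNegCircleIntegral_zpow_mul_le {R : ℂ → ℂ} {n : ℕ} {C : ℝ} (hε0 : 0 < ε)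
    (hε1 : ε ≤ 1) (hR : ∀ θ : ℝ, ‖R (ε * exp (I * θ))‖ ≤ C * ‖(ε : ℂ) * exp (I * θ)‖ ^ (n + 1)) :
    ‖1 / (2 * π * I) * logNegCircleIntegral (fun z => z ^ (-(n : ℤ)) * R z) ε‖ ≤
      C * (1 + π) * ε := by
  simp_rw [norm_ofReal_mul_exp_I_mul, abs_of_pos hε0] at hR
  have hC : 0 ≤ C := nonneg_of_mul_nonneg_left ((norm_nonneg _).trans (hR 0)) (by positivity)
  have hM (θ : ℝ) : ‖(ε * exp (I * θ)) ^ (-(n : ℤ)) * R (ε * exp (I * θ))‖ ≤ C * ε := by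
    rw [norm_mul, norm_zpow, norm_ofReal_mul_exp_I_mul, abs_of_pos hε0, zpow_neg, zpow_natCast,
      inv_mul_le_iff₀ (by positivity)]
    exact (hR θ).trans_eq (by ring)
  have hlog : |Real.log ε| * ε ≤ 1 := by
    simpa [abs_mul, abs_of_pos hε0] using (abs_log_mul_self_lt ε hε0 hε1).le
  have hπ : ‖(1 / (2 * π * I) : ℂ)‖ = 1 / (2 * π) := by simp [abs_of_pos pi_pos]
  calc _ ≤ 1 / (2 * π) * (C * ε * (|Real.log ε| + π) * ε * (2 * π)) := by
        rw [norm_mul, hπ]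
        gcongr
        exact norm_logNegCircleIntegral_le hε0 hM
    _ = C * ε * (|Real.log ε| * ε + π * ε) := by field_simp
    _ ≤ C * ε * (1 + π) := by gcongr; nlinarith [pi_pos]
    _ = C * (1 + π) * ε := by ring

theorem logNegCircleIntegral_zpow_sub_one (hε : ε ≠ 0) (m : ℤ) :
    logNegCircleIntegral (· ^ (m - 1)) ε =
      2 * π * I * if m = 0 then (Real.log ε : ℂ) else (ε : ℂ) ^ m / m := by
  have hεC : (ε : ℂ) ≠ 0 := ofReal_ne_zero.2 hε
  have hintegrand (θ : ℝ) :
      (ε * exp (I * θ)) ^ (m - 1) * ((Real.log ε : ℂ) + I * ((θ : ℂ) - π)) *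
          (I * ε * exp (I * θ)) =
        I * (ε : ℂ) ^ m * (exp (m * I * θ) * ((Real.log ε : ℂ) + I * ((θ : ℂ) - π))) := by
    have hz : (ε : ℂ) * exp (I * θ) ≠ 0 := mul_ne_zero hεC (exp_ne_zero _)
    rw [show (m : ℂ) * I * θ = m * (I * θ) by ring, exp_int_mul, zpow_sub_one₀ hz, mul_zpow]
    field_simp
  simp_rw [logNegCircleIntegral, hintegrand]
  rw [intervalIntegral.integral_const_mul, integral_exp_int_mul_I_mul_logNeg]
  split_ifs with hm
  · simp [hm]
    ring
  · field_simp

theorem logNegCircleIntegral_zpow_mul_sum (hε : ε ≠ 0) (n : ℤ) (s : Finset ℕ) (c : ℕ → ℂ) :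
    logNegCircleIntegral (fun z => z ^ (-n) * ∑ k ∈ s, c k * z ^ k) ε =
      ∑ k ∈ s, c k * (2 * π * I * if (k : ℤ) - n + 1 = 0 then (Real.log ε : ℂ)
        else (ε : ℂ) ^ ((k : ℤ) - n + 1) / ((k : ℤ) - n + 1 : ℤ)) := by
  have hz (θ : ℝ) : (ε : ℂ) * exp (I * θ) ≠ 0 := mul_ne_zero (ofReal_ne_zero.2 hε) (exp_ne_zero _)
  have hmonomial (z : ℂ) (hz : z ≠ 0) : z ^ (-n) * ∑ k ∈ s, c k * z ^ k =
      ∑ k ∈ s, c k * z ^ (((k : ℤ) - n + 1) - 1) := by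
    rw [Finset.mul_sum]
    refine Finset.sum_congr rfl fun k _ => ?_
    rw [add_sub_cancel_right, sub_eq_neg_add, zpow_add₀ hz, zpow_natCast]
    ring
  rw [logNegCircleIntegral_congr (h := fun z => ∑ k ∈ s, c k * z ^ (((k : ℤ) - n + 1) - 1))
      fun θ => hmonomial _ (hz θ),
    logNegCircleIntegral_finset_sum _ _ _ fun k _ θ => continuousAt_zpow₀ _ _ (.inl (hz θ))]
  simp_rw [logNegCircleIntegral_zpow_sub_one hε]

noncomputable def logNegPrincipalPart (d : ℕ → ℂ) (n : ℕ) (ε : ℝ) : ℂ :=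
  (Real.log ε : ℂ) / (Nat.factorial (n - 1)) * d (n - 1) -
    ∑ k ∈ Finset.range (n - 1),
      (ε : ℂ) ^ ((k : ℤ) - n + 1) * d k / ((Nat.factorial k : ℂ) * ((n : ℂ) - 1 - k))

theorem logNegCircleIntegral_zpow_mul_taylor (d : ℕ → ℂ) {n : ℕ} (hn : 1 ≤ n) (hε : ε ≠ 0) :
    1 / (2 * π * I) *
        logNegCircleIntegral (fun z => z ^ (-(n : ℤ)) * ∑ k ∈ range (n + 1), d k / k ! * z ^ k) ε =
      logNegPrincipalPart d n ε + d n / n ! * ε := by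
  have hterm (k : ℕ) (hk : k ∈ range (n - 1)) :
      1 / (2 * π * I) * (d k / k ! * (2 * π * I * if (k : ℤ) - n + 1 = 0 then (Real.log ε : ℂ)
        else (ε : ℂ) ^ ((k : ℤ) - n + 1) / ((k : ℤ) - n + 1 : ℤ))) =
      -((ε : ℂ) ^ ((k : ℤ) - n + 1) * d k / (k ! * ((n : ℂ) - 1 - k))) := by
    rw [Finset.mem_range] at hk
    rw [if_neg (by omega)]
    push_cast
    rw [show (k : ℂ) - n + 1 = -((n : ℂ) - 1 - k) by ring]
    field_simp
  have hlog : ((n - 1 : ℕ) : ℤ) - n + 1 = 0 := by omega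
  have hlinear : (n : ℤ) - n + 1 = 1 := by ring
  rw [logNegCircleIntegral_zpow_mul_sum hε, show n + 1 = n - 1 + 1 + 1 by omega,
    Finset.sum_range_succ, Finset.sum_range_succ, Nat.sub_add_cancel hn, if_pos hlog, hlinear,
    if_neg one_ne_zero, logNegPrincipalPart, sub_eq_add_neg, ← Finset.sum_neg_distrib, mul_add,
    mul_add, Finset.mul_sum, Finset.sum_congr rfl hterm, Int.cast_one, zpow_one, div_one]
  field_simp
  ring

theorem logNegCircleIntegral_zpow_mul_sub_principalPart {f : ℂ → ℂ} (d : ℕ → ℂ) {n : ℕ}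
    (hn : 1 ≤ n) (hε : ε ≠ 0) (hf : ∀ θ : ℝ, ContinuousAt f (ε * exp (I * θ))) :
    1 / (2 * π * I) * logNegCircleIntegral (fun z => z ^ (-(n : ℤ)) * f z) ε -
        logNegPrincipalPart d n ε =
      1 / (2 * π * I) * logNegCircleIntegral
          (fun z => z ^ (-(n : ℤ)) * (f z - ∑ k ∈ range (n + 1), d k / k ! * z ^ k)) ε +
        d n / n ! * ε := by
  have hz (θ : ℝ) : (ε : ℂ) * exp (I * θ) ≠ 0 := mul_ne_zero (ofReal_ne_zero.2 hε) (exp_ne_zero _)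
  have hzpow (θ : ℝ) := continuousAt_zpow₀ _ (-(n : ℤ)) (.inl (hz θ))
  have hsplit := logNegCircleIntegral_add
    (g := fun z => z ^ (-(n : ℤ)) * ∑ k ∈ range (n + 1), d k / k ! * z ^ k)
    (h := fun z => z ^ (-(n : ℤ)) * (f z - ∑ k ∈ range (n + 1), d k / k ! * z ^ k))
    (fun θ => (hzpow θ).mul (by fun_prop)) (fun θ => (hzpow θ).mul ((hf θ).sub (by fun_prop)))
  simp_rw [← mul_add, add_sub_cancel] at hsplit
  rw [hsplit, mul_add, logNegCircleIntegral_zpow_mul_taylor d hn hε]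
  ring

end

theorem stmt_11 (f : ℂ → ℂ) (n : ℕ) (hn : 1 ≤ n) (hf : AnalyticAt ℂ f 0) :
    (fun ε : ℝ =>
        (1 / (2 * π * Complex.I)) *
            (∫ θ in (0 : ℝ)..(2 * π),
              ((ε : ℂ) * Complex.exp (Complex.I * θ)) ^ (-(n : ℤ)) *
                f ((ε : ℂ) * Complex.exp (Complex.I * θ)) *
                ((Real.log ε : ℂ) + Complex.I * ((θ : ℂ) - π)) *
                (Complex.I * (ε : ℂ) * Complex.exp (Complex.I * θ)))
          - (((Real.log ε : ℂ) / (Nat.factorial (n - 1)) * iteratedDeriv (n - 1) f 0)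
              - ∑ k ∈ Finset.range (n - 1),
                  (ε : ℂ) ^ ((k : ℤ) - n + 1) * iteratedDeriv k f 0 /
                    ((Nat.factorial k : ℂ) * ((n : ℂ) - 1 - k))))
      =O[nhdsWithin 0 (Ioi 0)] (fun ε : ℝ => ε) := by
  change (fun ε : ℝ => 1 / (2 * π * Complex.I) *
      logNegCircleIntegral (fun z => z ^ (-(n : ℤ)) * f z) ε -
        logNegPrincipalPart (iteratedDeriv · f 0) n ε) =O[𝓝[>] 0] fun ε => ε
  obtain ⟨C, hC⟩ := (hf.isBigO_sub_taylor (n + 1)).bound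
  simp only [zero_add, norm_pow, norm_norm] at hC
  refine IsBigO.of_bound (C * (1 + π) + ‖iteratedDeriv n f 0 / (Nat.factorial n)‖) ?_
  filter_upwards [eventually_nhdsGT_forall_circle (hf.eventually_analyticAt.and hC),
    Ioc_mem_nhdsGT one_pos] with ε hnear ⟨hε0, hε1⟩
  rw [logNegCircleIntegral_zpow_mul_sub_principalPart _ hn hε0.ne'
    fun θ => (hnear θ).1.continuousAt]
  refine (norm_add_le _ _).trans ((add_le_add
    (norm_logNegCircleIntegral_zpow_mul_le hε0 hε1 fun θ => (hnear θ).2) le_rfl).trans_eq ?_)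
  rw [norm_mul, Complex.norm_real, Real.norm_eq_abs, abs_of_pos hε0]
  ring
end
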